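/- Let Θ, f : ℝ⁴ → ℝ be smooth functions of (w,z,x,y) and define the vector fields on ℝ⁵ (coordinates w,z,x,y,λ): L₀ = ∂_w − Θ_{xy} ∂_y + Θ_{yy} ∂_x − λ ∂_y + f_y ∂_λ and L₁ = ∂_z + Θ_{xx} ∂_y − Θ_{xy} ∂_x + λ ∂_x − f_x ∂_λ. If Θ and f satisfy the Dunajski system Θ_{wx} + Θ_{zy} + Θ_{xx}Θ_{yy} − Θ_{xy}² = f and f_{xw} + f_{yz} + Θ_{yy} f_{xx} + Θ_{xx} f_{yy} − 2Θ_{xy} f_{xy} = 0, then the commutator [L₀, L₁] vanishes identically. -/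

import Mathlib

/- Coordinates: on ℝ⁴, (w,z,x,y) = indices (0,1,2,3); on ℝ⁵ additionally λ = index 4. -/

/-- partial derivative in the i-th coordinate direction -/
noncomputable def pd {n : ℕ} (i : Fin n) (f : (Fin n → ℝ) → ℝ) : (Fin n → ℝ) → ℝ :=
  fun p => fderiv ℝ f p (Pi.single i 1)

/-- lift a function of (w,z,x,y) to a function of (w,z,x,y,λ) -/
def lift4 (f : (Fin 4 → ℝ) → ℝ) : (Fin 5 → ℝ) → ℝ :=
  fun q => f ![q 0, q 1, q 2, q 3]

noncomputable def P : (Fin 5 → ℝ) →L[ℝ] (Fin 4 → ℝ) :=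
  ContinuousLinearMap.pi (fun j => ContinuousLinearMap.proj (j.castSucc))

lemma P_apply (q : Fin 5 → ℝ) : P q = ![q 0, q 1, q 2, q 3] := by
  funext j; fin_cases j <;> rfl

lemma lift4_eq (h : (Fin 4 → ℝ) → ℝ) : lift4 h = h ∘ P := by
  funext q; simp [lift4, P_apply]

lemma contDiff_lift4 {h : (Fin 4 → ℝ) → ℝ} (hh : ContDiff ℝ (⊤ : ℕ∞) h) :
    ContDiff ℝ (⊤ : ℕ∞) (lift4 h) := by
  rw [lift4_eq]; exact hh.comp P.contDiff

lemma contDiff_pd {n : ℕ} (i : Fin n) {F : (Fin n → ℝ) → ℝ} (hF : ContDiff ℝ (⊤ : ℕ∞) F) :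
    ContDiff ℝ (⊤ : ℕ∞) (pd i F) := by
  have : pd i F = (fun L : (Fin n → ℝ) →L[ℝ] ℝ => L (Pi.single i 1)) ∘ fderiv ℝ F := rfl
  rw [this]
  exact (ContinuousLinearMap.apply ℝ ℝ (Pi.single i 1)).contDiff.comp
    (hF.fderiv_right (m := (⊤ : ℕ∞)) (by simp))

lemma pd_add {n : ℕ} (i : Fin n) {F G : (Fin n → ℝ) → ℝ} {q : Fin n → ℝ}
    (hF : DifferentiableAt ℝ F q) (hG : DifferentiableAt ℝ G q) :
    pd i (fun p => F p + G p) q = pd i F q + pd i G q := by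
  simp [pd, fderiv_fun_add hF hG]

lemma pd_sub {n : ℕ} (i : Fin n) {F G : (Fin n → ℝ) → ℝ} {q : Fin n → ℝ}
    (hF : DifferentiableAt ℝ F q) (hG : DifferentiableAt ℝ G q) :
    pd i (fun p => F p - G p) q = pd i F q - pd i G q := by
  simp [pd, fderiv_fun_sub hF hG]

lemma pd_mul {n : ℕ} (i : Fin n) {F G : (Fin n → ℝ) → ℝ} {q : Fin n → ℝ}
    (hF : DifferentiableAt ℝ F q) (hG : DifferentiableAt ℝ G q) :
    pd i (fun p => F p * G p) q = pd i F q * G q + F q * pd i G q := by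
  simp [pd, fderiv_fun_mul hF hG]; ring

lemma pd_coord {n : ℕ} (i j : Fin n) (q : Fin n → ℝ) :
    pd i (fun p => p j) q = if j = i then 1 else 0 := by
  have : fderiv ℝ (fun p : Fin n → ℝ => p j) q = ContinuousLinearMap.proj j :=
    (ContinuousLinearMap.proj j : (Fin n → ℝ) →L[ℝ] ℝ).fderiv
  simp [pd, this, Pi.single_apply]

lemma pd_comm {n : ℕ} (i j : Fin n) {F : (Fin n → ℝ) → ℝ} (hF : ContDiff ℝ (⊤ : ℕ∞) F)
    (q : Fin n → ℝ) : pd i (pd j F) q = pd j (pd i F) q := by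
  have h1 : ∀ (k : Fin n) (v : Fin n → ℝ), pd k (fun p => fderiv ℝ F p v) q
      = fderiv ℝ (fderiv ℝ F) q (Pi.single k 1) v := by
    intro k v
    have : (fun p => fderiv ℝ F p v)
        = (ContinuousLinearMap.apply ℝ ℝ v) ∘ fderiv ℝ F := rfl
    rw [pd, this, fderiv_comp _ (ContinuousLinearMap.apply ℝ ℝ v).differentiableAt
      ((hF.fderiv_right (m := (⊤ : ℕ∞)) ((by simp))).differentiable (by simp) q)]
    simp
  have hs : IsSymmSndFDerivAt ℝ F q :=
    hF.contDiffAt.isSymmSndFDerivAt (by simp only [minSmoothness_of_isRCLikeNormedField]; exact WithTop.coe_le_coe.2 (le_top : (2:ℕ∞) ≤ ⊤))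
  rw [show pd j F = fun p => fderiv ℝ F p (Pi.single j 1) from rfl,
    show pd i F = fun p => fderiv ℝ F p (Pi.single i 1) from rfl,
    h1 i, h1 j, hs]


lemma P_single (i : Fin 4) : P (Pi.single i.castSucc 1) = Pi.single i 1 := by
  funext j
  have h0 : (P (Pi.single i.castSucc 1)) j = (Pi.single i.castSucc (1:ℝ) : Fin 5 → ℝ) j.castSucc := by
    simp [P]
  rw [h0, Pi.single_apply, Pi.single_apply]
  simp [Fin.castSucc_inj]

lemma P_single4 : P (Pi.single (4 : Fin 5) 1) = 0 := by
  funext j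
  have h0 : (P (Pi.single (4:Fin 5) 1)) j = (Pi.single (4:Fin 5) (1:ℝ) : Fin 5 → ℝ) j.castSucc := by
    simp [P]
  rw [h0, Pi.single_apply]
  have hne : j.castSucc ≠ 4 := by
    intro h
    have := congrArg Fin.val h
    simp [Fin.val_last] at this
    omega
  simp [hne]

lemma pd_lift4 (i : Fin 4) {h : (Fin 4 → ℝ) → ℝ} (hh : ContDiff ℝ (⊤ : ℕ∞) h) (q : Fin 5 → ℝ) :
    pd i.castSucc (lift4 h) q = lift4 (pd i h) q := by
  rw [pd, lift4_eq, fderiv_comp _ ((hh.differentiable (by simp)) _) P.differentiableAt]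
  simp [P_single, lift4_eq, pd]

lemma pd_lift4_4 {h : (Fin 4 → ℝ) → ℝ} (hh : ContDiff ℝ (⊤ : ℕ∞) h) (q : Fin 5 → ℝ) :
    pd (4 : Fin 5) (lift4 h) q = 0 := by
  rw [pd, lift4_eq, fderiv_comp _ ((hh.differentiable (by simp)) _) P.differentiableAt]
  simp [P_single4]

lemma pd_lift4_0 {h} (hh : ContDiff ℝ (⊤ : ℕ∞) h) (q) :
    pd (0 : Fin 5) (lift4 h) q = lift4 (pd (0 : Fin 4) h) q := pd_lift4 0 hh q
lemma pd_lift4_1 {h} (hh : ContDiff ℝ (⊤ : ℕ∞) h) (q) :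
    pd (1 : Fin 5) (lift4 h) q = lift4 (pd (1 : Fin 4) h) q := pd_lift4 1 hh q
lemma pd_lift4_2 {h} (hh : ContDiff ℝ (⊤ : ℕ∞) h) (q) :
    pd (2 : Fin 5) (lift4 h) q = lift4 (pd (2 : Fin 4) h) q := pd_lift4 2 hh q
lemma pd_lift4_3 {h} (hh : ContDiff ℝ (⊤ : ℕ∞) h) (q) :
    pd (3 : Fin 5) (lift4 h) q = lift4 (pd (3 : Fin 4) h) q := pd_lift4 3 hh q

lemma pd_pow2 {n : ℕ} (i : Fin n) {F : (Fin n → ℝ) → ℝ} {q : Fin n → ℝ}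
    (hF : DifferentiableAt ℝ F q) :
    pd i (fun p => F p ^ 2) q = 2 * F q * pd i F q := by
  have h : (fun p => F p ^ 2) = fun p => F p * F p := by funext p; ring
  rw [h, pd_mul _ hF hF]; ring

@[fun_prop] lemma contDiff_pd' {n : ℕ} (i : Fin n) {F : (Fin n → ℝ) → ℝ}
    (hF : ContDiff ℝ (⊤ : ℕ∞) F) : ContDiff ℝ (⊤ : ℕ∞) (pd i F) := contDiff_pd i hF
@[fun_prop] lemma contDiff_lift4' {h : (Fin 4 → ℝ) → ℝ} (hh : ContDiff ℝ (⊤ : ℕ∞) h) :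
    ContDiff ℝ (⊤ : ℕ∞) (lift4 h) := contDiff_lift4 hh
@[fun_prop] lemma differentiable_pd {n : ℕ} (i : Fin n) {F : (Fin n → ℝ) → ℝ}
    (hF : ContDiff ℝ (⊤ : ℕ∞) F) : Differentiable ℝ (pd i F) :=
  (contDiff_pd i hF).differentiable (by simp)
@[fun_prop] lemma differentiable_lift4 {h : (Fin 4 → ℝ) → ℝ} (hh : ContDiff ℝ (⊤ : ℕ∞) h) :
    Differentiable ℝ (lift4 h) := (contDiff_lift4 hh).differentiable (by simp)


/-- L₀ = ∂_w − Θ_{xy} ∂_y + Θ_{yy} ∂_x − λ ∂_y + f_y ∂_λ -/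
noncomputable def L0 (Θ f : (Fin 4 → ℝ) → ℝ) (g : (Fin 5 → ℝ) → ℝ) : (Fin 5 → ℝ) → ℝ :=
  fun q => pd 0 g q - lift4 (pd 2 (pd 3 Θ)) q * pd 3 g q + lift4 (pd 3 (pd 3 Θ)) q * pd 2 g q
    - q 4 * pd 3 g q + lift4 (pd 3 f) q * pd 4 g q

/-- L₁ = ∂_z + Θ_{xx} ∂_y − Θ_{xy} ∂_x + λ ∂_x − f_x ∂_λ -/
noncomputable def L1 (Θ f : (Fin 4 → ℝ) → ℝ) (g : (Fin 5 → ℝ) → ℝ) : (Fin 5 → ℝ) → ℝ :=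
  fun q => pd 1 g q + lift4 (pd 2 (pd 2 Θ)) q * pd 3 g q - lift4 (pd 2 (pd 3 Θ)) q * pd 2 g q
    + q 4 * pd 2 g q - lift4 (pd 2 f) q * pd 4 g q

/-- If (Θ, f) satisfies the Dunajski system, then [L₀, L₁] = 0 identically. -/
theorem stmt_0 (Θ f : (Fin 4 → ℝ) → ℝ)
    (hΘ : ContDiff ℝ (⊤ : ℕ∞) Θ) (hf : ContDiff ℝ (⊤ : ℕ∞) f)
    (hDun1 : ∀ p : Fin 4 → ℝ,
      pd 0 (pd 2 Θ) p + pd 1 (pd 3 Θ) p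
        + pd 2 (pd 2 Θ) p * pd 3 (pd 3 Θ) p - (pd 2 (pd 3 Θ) p) ^ 2 = f p)
    (hDun2 : ∀ p : Fin 4 → ℝ,
      pd 2 (pd 0 f) p + pd 3 (pd 1 f) p
        + pd 3 (pd 3 Θ) p * pd 2 (pd 2 f) p + pd 2 (pd 2 Θ) p * pd 3 (pd 3 f) p
        - 2 * pd 2 (pd 3 Θ) p * pd 2 (pd 3 f) p = 0) :
    ∀ g : (Fin 5 → ℝ) → ℝ, ContDiff ℝ (⊤ : ℕ∞) g →
      ∀ q : Fin 5 → ℝ, L0 Θ f (L1 Θ f g) q - L1 Θ f (L0 Θ f g) q = 0 := by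
  intro g hg q
  -- commutation lemmas (function level, for use under lift4)
  have s32 : pd 3 (pd 2 Θ) = pd 2 (pd 3 Θ) := funext (pd_comm 3 2 hΘ)
  have o322 : pd 3 (pd 2 (pd 2 Θ)) = pd 2 (pd 3 (pd 2 Θ)) :=
    funext (pd_comm 3 2 (contDiff_pd 2 hΘ))
  have o323 : pd 3 (pd 2 (pd 3 Θ)) = pd 2 (pd 3 (pd 3 Θ)) :=
    funext (pd_comm 3 2 (contDiff_pd 3 hΘ))
  have o202 : pd 2 (pd 0 (pd 2 Θ)) = pd 0 (pd 2 (pd 2 Θ)) :=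
    funext (pd_comm 2 0 (contDiff_pd 2 hΘ))
  have o213 : pd 2 (pd 1 (pd 3 Θ)) = pd 1 (pd 2 (pd 3 Θ)) :=
    funext (pd_comm 2 1 (contDiff_pd 3 hΘ))
  have o302 : pd 3 (pd 0 (pd 2 Θ)) = pd 0 (pd 3 (pd 2 Θ)) :=
    funext (pd_comm 3 0 (contDiff_pd 2 hΘ))
  have o313 : pd 3 (pd 1 (pd 3 Θ)) = pd 1 (pd 3 (pd 3 Θ)) :=
    funext (pd_comm 3 1 (contDiff_pd 3 hΘ))
  have sf32 : pd 3 (pd 2 f) = pd 2 (pd 3 f) := funext (pd_comm 3 2 hf)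
  have sf20 : pd 2 (pd 0 f) = pd 0 (pd 2 f) := funext (pd_comm 2 0 hf)
  have sf31 : pd 3 (pd 1 f) = pd 1 (pd 3 f) := funext (pd_comm 3 1 hf)
  -- differentiated Dunajski 1
  have hD1 : (fun p => pd 0 (pd 2 Θ) p + pd 1 (pd 3 Θ) p
      + pd 2 (pd 2 Θ) p * pd 3 (pd 3 Θ) p - (pd 2 (pd 3 Θ) p) ^ 2) = f := funext hDun1
  have hD1x : ∀ p, pd 0 (pd 2 (pd 2 Θ)) p + pd 1 (pd 2 (pd 3 Θ)) p
      + pd 2 (pd 2 (pd 2 Θ)) p * pd 3 (pd 3 Θ) p + pd 2 (pd 2 Θ) p * pd 2 (pd 3 (pd 3 Θ)) p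
      - 2 * pd 2 (pd 3 Θ) p * pd 2 (pd 2 (pd 3 Θ)) p = pd 2 f p := by
    intro p
    have e : pd 2 (fun p => pd 0 (pd 2 Θ) p + pd 1 (pd 3 Θ) p
        + pd 2 (pd 2 Θ) p * pd 3 (pd 3 Θ) p - (pd 2 (pd 3 Θ) p) ^ 2) p = pd 2 f p := by
      rw [hD1]
    rw [← e]
    simp (disch := fun_prop) only [pd_add, pd_sub, pd_mul, pd_pow2]
    rw [o202, o213]
    ring
  have hD1y : ∀ p, pd 0 (pd 2 (pd 3 Θ)) p + pd 1 (pd 3 (pd 3 Θ)) p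
      + pd 2 (pd 2 (pd 3 Θ)) p * pd 3 (pd 3 Θ) p + pd 2 (pd 2 Θ) p * pd 3 (pd 3 (pd 3 Θ)) p
      - 2 * pd 2 (pd 3 Θ) p * pd 2 (pd 3 (pd 3 Θ)) p = pd 3 f p := by
    intro p
    have e : pd 3 (fun p => pd 0 (pd 2 Θ) p + pd 1 (pd 3 Θ) p
        + pd 2 (pd 2 Θ) p * pd 3 (pd 3 Θ) p - (pd 2 (pd 3 Θ) p) ^ 2) p = pd 3 f p := by
      rw [hD1]
    rw [← e]
    simp (disch := fun_prop) only [pd_add, pd_sub, pd_mul, pd_pow2]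
    rw [o302, o313, o322, o323, s32]
    ring
  -- expand the commutator
  have sw : ∀ i j : Fin 5, pd i (pd j g) q = pd j (pd i g) q := fun i j => pd_comm i j hg q
  unfold L0 L1
  simp (disch := fun_prop) only [pd_add, pd_sub, pd_mul, pd_coord, pd_lift4_0, pd_lift4_1,
    pd_lift4_2, pd_lift4_3, pd_lift4_4]
  simp only [sw 1 0, sw 2 0, sw 3 0, sw 4 0, sw 2 1, sw 3 1, sw 4 1, sw 3 2, sw 4 2, sw 4 3,
    o322, o323, s32, sf32]
  norm_num [show ((4:Fin 5) = 3) = False from by decide, show ((4:Fin 5) = 2) = False from by decide,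
    show ((4:Fin 5) = 1) = False from by decide, show ((4:Fin 5) = 0) = False from by decide]
  have h1 := hD1x ![q 0, q 1, q 2, q 3]
  have h2 := hD1y ![q 0, q 1, q 2, q 3]
  have h3 := hDun2 ![q 0, q 1, q 2, q 3]
  rw [sf20, sf31] at h3
  simp only [lift4]

  linear_combination (-(pd 2 g q)) * h2 + (pd 3 g q) * h1 + (-(pd 4 g q)) * h3
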